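/- arXiv:1712.03853 — 6 statements merged into one kernel-verified Lean document; each statement's English description precedes it below -/
import Mathlib

section
/- If f is a positive function on [X,∞) with upper Matuszewska index α(f) < 0, then f(x) → 0 as x → ∞. -/
open Filter Set

/-- The set of admissible upper exponents in the definition of the upper Matuszewska index:
`a` belongs to the set if there is `C > 0` such that for each `μ* > 1`,
`f (μ x) ≤ C μ^a f x` for all `μ ∈ [1, μ*]` and all sufficiently large `x`. -/
def upperMatSet (f : ℝ → ℝ) : Set ℝ :=
  {a | ∃ C > (0 : ℝ), ∀ μs > (1 : ℝ), ∃ X : ℝ, ∀ x ≥ X, ∀ μ ∈ Set.Icc (1 : ℝ) μs,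
    f (μ * x) ≤ C * μ ^ a * f x}

/-- The upper Matuszewska index `α(f)` as an extended real number. -/
noncomputable def upperMat (f : ℝ → ℝ) : EReal :=
  sInf ((fun a : ℝ => (a : EReal)) '' upperMatSet f)

/-- The set of admissible lower exponents in the definition of the lower Matuszewska index. -/
def lowerMatSet (f : ℝ → ℝ) : Set ℝ :=
  {b | ∃ D > (0 : ℝ), ∀ μs > (1 : ℝ), ∃ X : ℝ, ∀ x ≥ X, ∀ μ ∈ Set.Icc (1 : ℝ) μs,
    D * μ ^ b * f x ≤ f (μ * x)}

/-- The lower Matuszewska index `β(f)` as an extended real number. -/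
noncomputable def lowerMat (f : ℝ → ℝ) : EReal :=
  sSup ((fun b : ℝ => (b : EReal)) '' lowerMatSet f)

open Real in
theorem stmt1_aux (X : ℝ) (f : ℝ → ℝ) (hpos : ∀ x ≥ X, 0 < f x)
    (hα : sInf ((fun a : ℝ => (a : EReal)) '' {a | ∃ C > (0 : ℝ), ∀ μs > (1 : ℝ), ∃ X : ℝ, ∀ x ≥ X, ∀ μ ∈ Set.Icc (1 : ℝ) μs,
    f (μ * x) ≤ C * μ ^ a * f x}) < 0) :
    Tendsto f atTop (nhds 0) := by
  obtain ⟨e, ⟨a, ha_mem, rfl⟩, hlt⟩ := sInf_lt_iff.mp hα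
  have ha : a < 0 := by simpa using (EReal.coe_lt_coe_iff.mp (by simpa using hlt))
  obtain ⟨C, hC, hCprop⟩ := ha_mem
  -- choose μ0 > 1 with C * μ0 ^ a ≤ 1/2
  obtain ⟨μ0, hμ01, hμ0half⟩ : ∃ μ0 : ℝ, 1 < μ0 ∧ C * μ0 ^ a ≤ 1/2 := by
    set b : ℝ := (2*C) ^ ((-a)⁻¹) with hb
    have h2C : (0:ℝ) < 2*C := by linarith
    have hb0 : 0 < b := rpow_pos_of_pos h2C _
    set M := max 2 b with hM
    have hM1 : (1:ℝ) < M := lt_of_lt_of_le one_lt_two (le_max_left _ _)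
    refine ⟨M, hM1, ?_⟩
    have h1 : (2*C) ≤ M ^ (-a) := by
      calc (2*C) = b ^ (-a) := by
            rw [hb, ← rpow_mul h2C.le, inv_mul_cancel₀ (by linarith : -a ≠ 0), rpow_one]
        _ ≤ M ^ (-a) := rpow_le_rpow hb0.le (le_max_right _ _) (by linarith)
    have hMp : (0:ℝ) < M ^ (-a) := rpow_pos_of_pos (by linarith) _
    have hMa : M ^ a = (M ^ (-a))⁻¹ := by
      rw [← rpow_neg (by linarith : (0:ℝ) ≤ M), neg_neg]
    rw [hMa, mul_inv_le_iff₀ hMp]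
    linarith
  obtain ⟨X0, hX0⟩ := hCprop μ0 hμ01
  set x1 : ℝ := max (max X0 X) 1 with hx1def
  have hx1X0 : X0 ≤ x1 := le_trans (le_max_left _ _) (le_max_left _ _)
  have hx1X : X ≤ x1 := le_trans (le_max_right _ _) (le_max_left _ _)
  have hx11 : (1:ℝ) ≤ x1 := le_max_right _ _
  have hx1pos : (0:ℝ) < x1 := lt_of_lt_of_le one_pos hx11
  have hfx1 : 0 < f x1 := hpos x1 hx1X
  -- key bound on blocks
  have key : ∀ n : ℕ, ∀ y : ℝ, μ0 ^ n * x1 ≤ y → y ≤ μ0 ^ (n+1) * x1 →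
      f y ≤ (1/2) ^ n * (C * f x1) := by
    intro n
    induction n with
    | zero =>
      intro y hy1 hy2
      simp only [pow_zero, one_mul] at hy1
      have hμ : y / x1 ∈ Set.Icc (1:ℝ) μ0 := by
        constructor
        · rw [le_div_iff₀ hx1pos]; linarith
        · rw [div_le_iff₀ hx1pos]; simpa [pow_one] using hy2
      have := hX0 x1 hx1X0 (y / x1) hμ
      rw [div_mul_cancel₀ _ (ne_of_gt hx1pos)] at this
      have hμa : (y / x1) ^ a ≤ 1 :=
        rpow_le_one_of_one_le_of_nonpos hμ.1 ha.le
      calc f y ≤ C * (y / x1) ^ a * f x1 := this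
        _ ≤ C * 1 * f x1 := by
            apply mul_le_mul_of_nonneg_right _ hfx1.le
            exact mul_le_mul_of_nonneg_left hμa hC.le
        _ = (1/2)^0 * (C * f x1) := by ring
    | succ n ih =>
      intro y hy1 hy2
      set z := y / μ0 with hz
      have hμ0pos : (0:ℝ) < μ0 := lt_trans one_pos hμ01
      have hz1 : μ0 ^ n * x1 ≤ z := by
        rw [hz, le_div_iff₀ hμ0pos]
        calc μ0 ^ n * x1 * μ0 = μ0 ^ (n+1) * x1 := by ring
          _ ≤ y := hy1
      have hz2 : z ≤ μ0 ^ (n+1) * x1 := by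
        rw [hz, div_le_iff₀ hμ0pos]
        calc y ≤ μ0 ^ (n+2) * x1 := hy2
          _ = μ0 ^ (n+1) * x1 * μ0 := by ring
      have hzx1 : x1 ≤ z := by
        have : (1:ℝ) ≤ μ0 ^ n := one_le_pow₀ hμ01.le
        nlinarith
      have hzX0 : X0 ≤ z := le_trans hx1X0 hzx1
      have hfz : 0 < f z := hpos z (le_trans hx1X hzx1)
      have hstep := hX0 z hzX0 μ0 ⟨hμ01.le, le_refl _⟩
      have hyz : y = μ0 * z := by
        rw [hz, mul_div_cancel₀ _ (ne_of_gt hμ0pos)]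
      have h1 : f y ≤ (1/2) * f z := by
        rw [hyz]
        calc f (μ0 * z) ≤ C * μ0 ^ a * f z := hstep
          _ ≤ (1/2) * f z := mul_le_mul_of_nonneg_right hμ0half hfz.le
      calc f y ≤ (1/2) * f z := h1
        _ ≤ (1/2) * ((1/2)^n * (C * f x1)) := by
            apply mul_le_mul_of_nonneg_left (ih z hz1 hz2) (by norm_num)
        _ = (1/2)^(n+1) * (C * f x1) := by ring
  -- conclude
  rw [Metric.tendsto_atTop]
  intro ε hε
  obtain ⟨n, hn⟩ : ∃ n : ℕ, (1/2:ℝ)^n * (C * f x1) < ε := by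
    obtain ⟨n, hn⟩ := exists_pow_lt_of_lt_one (div_pos hε (mul_pos hC hfx1)) (by norm_num : (1/2:ℝ) < 1)
    exact ⟨n, by rwa [← lt_div_iff₀ (mul_pos hC hfx1)]⟩
  refine ⟨μ0 ^ n * x1, fun y hy => ?_⟩
  have hμ0pos : (0:ℝ) < μ0 := lt_trans one_pos hμ01
  have hyx1 : 1 ≤ y / x1 := by
    rw [le_div_iff₀ hx1pos]
    have : (1:ℝ) ≤ μ0 ^ n := one_le_pow₀ hμ01.le
    nlinarith
  obtain ⟨m, hm1, hm2⟩ := exists_nat_pow_near hyx1 hμ01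
  have hy1 : μ0 ^ m * x1 ≤ y := by
    rw [← le_div_iff₀ hx1pos]; exact hm1
  have hy2 : y ≤ μ0 ^ (m+1) * x1 := by
    rw [← div_le_iff₀ hx1pos] at *; exact hm2.le
  have hnm : n ≤ m := by
    by_contra h
    push_neg at h
    have : μ0 ^ n ≤ y / x1 := by
      rw [le_div_iff₀ hx1pos]; exact hy
    have h2 : y / x1 < μ0 ^ n := lt_of_lt_of_le hm2 (pow_le_pow_right₀ hμ01.le h)
    linarith
  have hfy := key m y hy1 hy2
  have hfypos : 0 < f y := hpos y (le_trans hx1X (le_trans (by nlinarith [one_le_pow₀ hμ01.le (n := m)]) hy1))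
  rw [Real.dist_eq, sub_zero, abs_of_pos hfypos]
  calc f y ≤ (1/2)^m * (C * f x1) := hfy
    _ ≤ (1/2)^n * (C * f x1) := by
        apply mul_le_mul_of_nonneg_right _ (mul_pos hC hfx1).le
        exact pow_le_pow_of_le_one (by norm_num) (by norm_num) hnm
    _ < ε := hn

/-- A positive function on `[X, ∞)` with negative upper Matuszewska index
tends to zero at infinity. -/
theorem stmt1 (X : ℝ) (f : ℝ → ℝ) (hpos : ∀ x ≥ X, 0 < f x)
    (hα : upperMat f < 0) :
    Tendsto f atTop (nhds 0) := by
  exact stmt1_aux X f hpos hα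
end

section
/- Let f be a positive, strictly increasing function on [X,∞) that is unbounded above and has finite upper Matuszewska index α(f) > 0. Then the lower Matuszewska index of its right inverse satisfies β(f⁻¹) = 1/α(f). -/
open Filter Set

/-!
Write `g` for the right inverse of `f`, so that `g (f x) = x`. An upper bound
`f (λ x) ≤ C λ^a f x` inverts into a lower bound `C^(-1/a) μ^(1/a) g y ≤ g (μ y)`: put
`λ = (μ / C)^(1/a)`, so that `f (λ w) ≤ μ f w < μ y` whenever `w < g y`. Conversely a lower bound
`D μ^b g y ≤ g (μ y)` taken at `y = f x` gives `f (λ x) ≤ C' λ^(1/b) f x`. Hence `b ↦ 1/b` maps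
the positive admissible exponents of `f` into those of `g` and back, and the infimum `a > 0` of
the former turns into the supremum `1/a` of the latter.
-/

theorem EReal.sSup_coe_image_eq_inv {S T : Set ℝ} {a : ℝ} (ha : 0 < a)
    (hS : sInf ((↑) '' S : Set EReal) = a)
    (hST : ∀ s ∈ S, 0 < s → s⁻¹ ∈ T) (hTS : ∀ t ∈ T, 0 < t → t⁻¹ ∈ S) :
    sSup ((↑) '' T : Set EReal) = (a⁻¹ : ℝ) := by
  have ha_le : ∀ s ∈ S, a ≤ s := fun s hs => by
    exact_mod_cast hS ▸ sInf_le (mem_image_of_mem _ hs)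
  refine le_antisymm (sSup_le ?_) ?_
  · rintro _ ⟨t, ht, rfl⟩
    norm_cast
    rcases le_or_gt t 0 with ht0 | ht0
    · exact ht0.trans (inv_pos.2 ha).le
    · exact (le_inv_comm₀ ha ht0).1 (ha_le _ (hTS t ht ht0))
  · by_contra! h
    obtain ⟨z, hTz, hza⟩ := EReal.exists_between_coe_real h
    obtain ⟨s₀, hs₀⟩ : S.Nonempty := by
      by_contra! hS₀
      simp [hS₀] at hS
    have hinv_lt : ∀ s ∈ S, s⁻¹ < z := by
      intro s hs
      have hs_pos : 0 < s := ha.trans_le (ha_le s hs)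
      exact_mod_cast (le_sSup (mem_image_of_mem _ (hST s hs hs_pos))).trans_lt hTz
    have hz : 0 < z := (inv_pos.2 (ha.trans_le (ha_le s₀ hs₀))).trans (hinv_lt s₀ hs₀)
    have hza' : z⁻¹ ≤ a := by
      refine EReal.coe_le_coe_iff.1 (hS ▸ le_sInf ?_)
      rintro _ ⟨s, hs, rfl⟩
      exact_mod_cast (inv_le_comm₀ hz (ha.trans_le (ha_le s hs))).2 (hinv_lt s hs).le
    exact (EReal.coe_lt_coe_iff.1 hza).not_ge ((inv_le_comm₀ hz ha).1 hza')

noncomputable def rightInv (X : ℝ) (f : ℝ → ℝ) (y : ℝ) : ℝ := sInf {x | X ≤ x ∧ y ≤ f x}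

section RightInv

variable {X : ℝ} {f : ℝ → ℝ}

theorem nonempty_setOf_le_apply (hunb : ∀ M : ℝ, ∃ x ≥ X, M < f x) (y : ℝ) :
    {x | X ≤ x ∧ y ≤ f x}.Nonempty :=
  let ⟨x, hx, hfx⟩ := hunb y
  ⟨x, hx, hfx.le⟩

theorem rightInv_mono (hunb : ∀ M : ℝ, ∃ x ≥ X, M < f x) : Monotone (rightInv X f) :=
  fun _ _ h => csInf_le_csInf ⟨X, fun _ hz => hz.1⟩ (nonempty_setOf_le_apply hunb _)
    fun _ hz => ⟨hz.1, h.trans hz.2⟩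

theorem rightInv_apply (hmono : StrictMonoOn f (Ici X)) {x : ℝ} (hx : X ≤ x) :
    rightInv X f (f x) = x :=
  le_antisymm (csInf_le ⟨X, fun _ hz => hz.1⟩ ⟨hx, le_rfl⟩)
    (le_csInf ⟨x, hx, le_rfl⟩ fun _ hz => hmono.le_iff_le hx hz.1 |>.1 hz.2)

theorem apply_lt_of_lt_rightInv {y z : ℝ} (hz : X ≤ z) (h : z < rightInv X f y) : f z < y :=
  not_le.1 fun hyz => h.not_ge (csInf_le ⟨X, fun _ hw => hw.1⟩ ⟨hz, hyz⟩)

theorem mul_rightInv_le_rightInv_mul (hunb : ∀ M : ℝ, ∃ x ≥ X, M < f x)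
    (hmono : MonotoneOn f (Ici X)) {W lam c y : ℝ} (hXW : X ≤ W) (hW : 0 ≤ W) (hlam : 1 ≤ lam)
    (hc : 0 < c) (hbound : ∀ w ≥ W, f (lam * w) ≤ c * f w) (hWy : W < rightInv X f y) :
    lam * rightInv X f y ≤ rightInv X f (c * y) := by
  refine le_csInf (nonempty_setOf_le_apply hunb _) fun z ⟨hXz, hcz⟩ => ?_
  by_contra! hz
  have hlam₀ : 0 < lam := one_pos.trans_le hlam
  set w := max (z / lam) W
  have hWw : W ≤ w := le_max_right _ _
  have hwy : w < rightInv X f y := max_lt ((div_lt_iff₀' hlam₀).2 hz) hWy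
  have hzw : z ≤ lam * w := (div_le_iff₀' hlam₀).1 (le_max_left _ _)
  have hfz : f z ≤ f (lam * w) :=
    hmono hXz (hXW.trans (hWw.trans (le_mul_of_one_le_left (hW.trans hWw) hlam))) hzw
  have hfw : f w < y := apply_lt_of_lt_rightInv (hXW.trans hWw) hwy
  linarith [hbound w hWw, mul_lt_mul_of_pos_left hfw hc]

theorem inv_mem_lowerMatSet_rightInv (hpos : ∀ x ≥ X, 0 < f x) (hmono : StrictMonoOn f (Ici X))
    (hunb : ∀ M : ℝ, ∃ x ≥ X, M < f x) {a : ℝ} (ha : 0 < a) (hmem : a ∈ upperMatSet f) :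
    a⁻¹ ∈ lowerMatSet (rightInv X f) := by
  obtain ⟨C, -, hC⟩ := hmem
  set C₁ := max C 1
  have hC₁ : 0 < C₁ := one_pos.trans_le (le_max_right _ _)
  refine ⟨C₁ ^ (-a⁻¹), Real.rpow_pos_of_pos hC₁ _, fun μs _ => ?_⟩
  obtain ⟨X₀, hX₀⟩ := hC (max 2 ((μs / C₁) ^ a⁻¹)) (one_lt_two.trans_le (le_max_left _ _))
  set W := max (max X₀ X) 0
  have hXW : X ≤ W := (le_max_right _ _).trans (le_max_left _ _)
  have hW : 0 ≤ W := le_max_right _ _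
  refine ⟨f (W + 1), fun y hy μ ⟨hμ, hμs⟩ => ?_⟩
  have hWy : W < rightInv X f y := calc
    W < W + 1 := lt_add_one W
    _ = rightInv X f (f (W + 1)) := (rightInv_apply hmono (by linarith)).symm
    _ ≤ rightInv X f y := rightInv_mono hunb hy
  set lam := max 1 ((μ / C₁) ^ a⁻¹) with hlam
  have hbound : ∀ w ≥ W, f (lam * w) ≤ μ * f w := by
    intro w hw
    have hfw : 0 < f w := hpos w (hXW.trans hw)
    rcases le_total ((μ / C₁) ^ a⁻¹) 1 with h | h
    · rw [hlam, max_eq_left h, one_mul]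
      exact le_mul_of_one_le_left hfw.le hμ
    · rw [hlam, max_eq_right h]
      have hX₀w : X₀ ≤ w := (le_max_left _ _).trans ((le_max_left _ _).trans hw)
      calc f ((μ / C₁) ^ a⁻¹ * w) ≤ C * ((μ / C₁) ^ a⁻¹) ^ a * f w :=
            hX₀ w hX₀w _ ⟨h, le_max_of_le_right (by gcongr)⟩
        _ ≤ C₁ * (μ / C₁) * f w := by
            rw [Real.rpow_inv_rpow (by positivity) ha.ne']
            gcongr
            exact le_max_left _ _
        _ = μ * f w := by field_simp
  calc C₁ ^ (-a⁻¹) * μ ^ a⁻¹ * rightInv X f y = (μ / C₁) ^ a⁻¹ * rightInv X f y := by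
        rw [Real.div_rpow (by linarith) hC₁.le, Real.rpow_neg hC₁.le]
        ring
    _ ≤ lam * rightInv X f y := mul_le_mul_of_nonneg_right (le_max_right _ _) (by linarith)
    _ ≤ rightInv X f (μ * y) :=
        mul_rightInv_le_rightInv_mul hunb hmono.monotoneOn hXW hW (le_max_left _ _)
          (by linarith) hbound hWy

theorem inv_mem_upperMatSet_of_mem_lowerMatSet_rightInv (hmono : StrictMonoOn f (Ici X))
    (hunb : ∀ M : ℝ, ∃ x ≥ X, M < f x) {b : ℝ} (hb : 0 < b)
    (hmem : b ∈ lowerMatSet (rightInv X f)) : b⁻¹ ∈ upperMatSet f := by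
  obtain ⟨D, hD, hDprop⟩ := hmem
  -- Shrinking `D` to `D₀ ≤ 1` keeps `μ ≥ 1`; the factor `2` leaves room for a strict inequality.
  set D₀ := min D 1
  have hD₀ : 0 < D₀ := lt_min hD one_pos
  have hD₀1 : D₀ ≤ 1 := min_le_right _ _
  refine ⟨(2 / D₀) ^ b⁻¹, by positivity, fun ls hls => ?_⟩
  obtain ⟨Y, hY⟩ := hDprop ((2 * ls / D₀) ^ b⁻¹)
    (Real.one_lt_rpow ((one_lt_div hD₀).2 (by linarith)) (inv_pos.2 hb))
  obtain ⟨x₀, hx₀, hfx₀⟩ := hunb Y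
  refine ⟨max x₀ (max X 1), fun x hx l ⟨hl, hlls⟩ => ?_⟩
  have hxX : X ≤ x := (le_max_left _ _).trans ((le_max_right _ _).trans hx)
  have hx1 : 1 ≤ x := (le_max_right _ _).trans ((le_max_right _ _).trans hx)
  have hfx : Y ≤ f x := hfx₀.le.trans (hmono.monotoneOn hx₀ hxX ((le_max_left _ _).trans hx))
  set μ := (2 * l / D₀) ^ b⁻¹ with hμ
  have hμb : μ ^ b = 2 * l / D₀ := Real.rpow_inv_rpow (by positivity) hb.ne'
  have h2l : 2 * l ≤ D * μ ^ b := by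
    rw [hμb]
    calc 2 * l = D₀ * (2 * l / D₀) := by field_simp
      _ ≤ D * (2 * l / D₀) := by gcongr; exact min_le_left _ _
  have hlx : l * x < rightInv X f (μ * f x) := calc
    l * x < D * μ ^ b * x := by nlinarith
    _ = D * μ ^ b * rightInv X f (f x) := by rw [rightInv_apply hmono hxX]
    _ ≤ rightInv X f (μ * f x) :=
        hY (f x) hfx μ ⟨Real.one_le_rpow ((one_le_div hD₀).2 (by linarith)) (inv_pos.2 hb).le,
          by rw [hμ]; gcongr⟩
  calc f (l * x) ≤ μ * f x :=
        (apply_lt_of_lt_rightInv (hxX.trans (le_mul_of_one_le_left (by linarith) hl)) hlx).le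
    _ = (2 / D₀) ^ b⁻¹ * l ^ b⁻¹ * f x := by
        rw [hμ, mul_div_right_comm, Real.mul_rpow (by positivity) (by linarith)]

end RightInv

/-- For a positive, strictly increasing, unbounded function `f` on `[X, ∞)`
with finite positive upper Matuszewska index `α(f) = a`, the lower Matuszewska index of
its (right) inverse equals `1 / a`. -/
theorem stmt3 (X : ℝ) (f : ℝ → ℝ) (hpos : ∀ x ≥ X, 0 < f x)
    (hmono : StrictMonoOn f (Set.Ici X))
    (hunb : ∀ M : ℝ, ∃ x ≥ X, M < f x)
    (a : ℝ) (ha : 0 < a) (hα : upperMat f = (a : EReal)) :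
    lowerMat (fun y => sInf {x | X ≤ x ∧ y ≤ f x}) = ((1 / a : ℝ) : EReal) := by
  rw [one_div]
  exact EReal.sSup_coe_image_eq_inv ha hα
    (fun _ hs hs₀ => inv_mem_lowerMatSet_rightInv hpos hmono hunb hs₀ hs)
    (fun _ ht ht₀ => inv_mem_upperMatSet_of_mem_lowerMatSet_rightInv hmono hunb ht₀ ht)
end

section
/- Let B be a nonnegative random variable with c.d.f. F, F(0) = 0, finite mean E[B] > 0, and unbounded support (x_R = ∞). Define G(x) = (1/E[B])∫₀ˣ (1-F(t)) dt. If the tail 1-F has finite lower Matuszewska index β(1-F) > -∞, then the upper Matuszewska index of 1-G satisfies α(1-G) ≤ α(1-F) + 1 and the lower index satisfies β(1-G) ≥ β(1-F) + 1. -/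
open Filter Set

open MeasureTheory

/-! The substitution `t = μ s` gives `∫_{μx}^∞ F̄ = μ ∫_x^∞ F̄(μ s) ds`, so integrating a bound
`F̄(μ s) ≤ C μ^a F̄(s)` (or `≥ D μ^b F̄(s)`) over `s > x` yields the same bound for the integrated
tail with `μ^(a+1)` (or `μ^(b+1)`). Every admissible exponent for `F̄` thus shifts by one to an
admissible exponent for `Ḡ`, and the indices, being the infimum and supremum of these
exponents, shift accordingly. -/

namespace EReal

noncomputable def addRealOrderIso (c : ℝ) : EReal ≃o EReal where
  toFun x := x + c
  invFun x := x - c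
  left_inv _ := EReal.add_sub_cancel_right
  right_inv _ := EReal.sub_add_cancel
  map_rel_iff' := (EReal.addLECancellable_coe c).add_le_add_iff_right

lemma addRealOrderIso_apply (c : ℝ) (x : EReal) : addRealOrderIso c x = x + c := rfl

lemma addRealOrderIso_coe (c a : ℝ) : addRealOrderIso c a = ((a + c : ℝ) : EReal) := by
  rw [addRealOrderIso_apply, EReal.coe_add]

end EReal

lemma upperMat_le_add_of_forall_mem {f g : ℝ → ℝ} {c : ℝ}
    (h : ∀ a ∈ upperMatSet f, a + c ∈ upperMatSet g) : upperMat g ≤ upperMat f + c := by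
  rw [upperMat, upperMat, ← EReal.addRealOrderIso_apply, OrderIso.map_sInf]
  refine le_iInf₂ ?_
  rintro _ ⟨a, ha, rfl⟩
  rw [EReal.addRealOrderIso_coe]
  exact sInf_le ⟨a + c, h a ha, rfl⟩

lemma add_le_lowerMat_of_forall_mem {f g : ℝ → ℝ} {c : ℝ}
    (h : ∀ b ∈ lowerMatSet f, b + c ∈ lowerMatSet g) : lowerMat f + c ≤ lowerMat g := by
  rw [lowerMat, lowerMat, ← EReal.addRealOrderIso_apply, OrderIso.map_sSup]
  refine iSup₂_le ?_
  rintro _ ⟨b, hb, rfl⟩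
  rw [EReal.addRealOrderIso_coe]
  exact le_sSup ⟨b + c, h b hb, rfl⟩

section DivConst

variable {f : ℝ → ℝ} {c : ℝ}

lemma upperMatSet_subset_div_const (hc : 0 ≤ c) :
    upperMatSet f ⊆ upperMatSet (fun x => f x / c) := by
  rintro a ⟨C, hC, hCa⟩
  refine ⟨C, hC, fun μs hμs => ?_⟩
  obtain ⟨X, hX⟩ := hCa μs hμs
  refine ⟨X, fun x hx μ hμ => ?_⟩
  rw [← mul_div_assoc]
  exact div_le_div_of_nonneg_right (hX x hx μ hμ) hc

lemma lowerMatSet_subset_div_const (hc : 0 ≤ c) :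
    lowerMatSet f ⊆ lowerMatSet (fun x => f x / c) := by
  rintro b ⟨D, hD, hDb⟩
  refine ⟨D, hD, fun μs hμs => ?_⟩
  obtain ⟨X, hX⟩ := hDb μs hμs
  refine ⟨X, fun x hx μ hμ => ?_⟩
  rw [← mul_div_assoc]
  exact div_le_div_of_nonneg_right (hX x hx μ hμ) hc

end DivConst

section IntegralIoi

variable {f : ℝ → ℝ} {x μ K : ℝ}

lemma integral_Ioi_mul_le (hμ : 0 < μ) (hx : IntegrableOn f (Ioi x))
    (hμx : IntegrableOn f (Ioi (μ * x))) (h : ∀ s > x, f (μ * s) ≤ K * f s) :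
    ∫ t in Ioi (μ * x), f t ≤ μ * K * ∫ t in Ioi x, f t := by
  rw [← integral_comp_mul_left_Ioi' f x hμ, smul_eq_mul, mul_assoc, ← integral_const_mul K]
  refine mul_le_mul_of_nonneg_left ?_ hμ.le
  exact setIntegral_mono_on ((integrableOn_Ioi_comp_mul_left_iff f x hμ).2 hμx)
    (hx.const_mul K) measurableSet_Ioi h

lemma le_integral_Ioi_mul (hμ : 0 < μ) (hx : IntegrableOn f (Ioi x))
    (hμx : IntegrableOn f (Ioi (μ * x))) (h : ∀ s > x, K * f s ≤ f (μ * s)) :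
    μ * K * ∫ t in Ioi x, f t ≤ ∫ t in Ioi (μ * x), f t := by
  rw [← integral_comp_mul_left_Ioi' f x hμ, smul_eq_mul, mul_assoc, ← integral_const_mul K]
  refine mul_le_mul_of_nonneg_left ?_ hμ.le
  exact setIntegral_mono_on (hx.const_mul K)
    ((integrableOn_Ioi_comp_mul_left_iff f x hμ).2 hμx) measurableSet_Ioi h

end IntegralIoi

section IntegratedTail

variable {f : ℝ → ℝ} {x₀ : ℝ}

lemma add_one_mem_upperMatSet_integral_Ioi (hf : IntegrableOn f (Ioi x₀)) {a : ℝ}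
    (ha : a ∈ upperMatSet f) : a + 1 ∈ upperMatSet (fun x => ∫ t in Ioi x, f t) := by
  obtain ⟨C, hC, hCa⟩ := ha
  refine ⟨C, hC, fun μs hμs => ?_⟩
  obtain ⟨X, hX⟩ := hCa μs hμs
  refine ⟨max (max X x₀) 1, fun x hx μ hμ => ?_⟩
  simp only [ge_iff_le, max_le_iff] at hx
  obtain ⟨⟨hXx, hx₀x⟩, hx1⟩ := hx
  have hμ0 : 0 < μ := one_pos.trans_le hμ.1
  have hxμx : x ≤ μ * x := le_mul_of_one_le_left (by linarith) hμ.1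
  calc ∫ t in Ioi (μ * x), f t
      ≤ μ * (C * μ ^ a) * ∫ t in Ioi x, f t :=
        integral_Ioi_mul_le hμ0 (hf.mono_set (Ioi_subset_Ioi hx₀x))
          (hf.mono_set (Ioi_subset_Ioi (hx₀x.trans hxμx)))
          fun s hs => hX s (hXx.trans hs.le) μ hμ
    _ = C * μ ^ (a + 1) * ∫ t in Ioi x, f t := by
        rw [Real.rpow_add_one hμ0.ne']; ring

lemma add_one_mem_lowerMatSet_integral_Ioi (hf : IntegrableOn f (Ioi x₀)) {b : ℝ}
    (hb : b ∈ lowerMatSet f) : b + 1 ∈ lowerMatSet (fun x => ∫ t in Ioi x, f t) := by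
  obtain ⟨D, hD, hDb⟩ := hb
  refine ⟨D, hD, fun μs hμs => ?_⟩
  obtain ⟨X, hX⟩ := hDb μs hμs
  refine ⟨max (max X x₀) 1, fun x hx μ hμ => ?_⟩
  simp only [ge_iff_le, max_le_iff] at hx
  obtain ⟨⟨hXx, hx₀x⟩, hx1⟩ := hx
  have hμ0 : 0 < μ := one_pos.trans_le hμ.1
  have hxμx : x ≤ μ * x := le_mul_of_one_le_left (by linarith) hμ.1
  calc D * μ ^ (b + 1) * ∫ t in Ioi x, f t
      = μ * (D * μ ^ b) * ∫ t in Ioi x, f t := by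
        rw [Real.rpow_add_one hμ0.ne']; ring
    _ ≤ ∫ t in Ioi (μ * x), f t :=
        le_integral_Ioi_mul hμ0 (hf.mono_set (Ioi_subset_Ioi hx₀x))
          (hf.mono_set (Ioi_subset_Ioi (hx₀x.trans hxμx)))
          fun s hs => hX s (hXx.trans hs.le) μ hμ

end IntegratedTail

theorem stmt4_general (F : ℝ → ℝ)
    (EB : ℝ) (hEBpos : 0 < EB)
    (hInt : IntegrableOn (fun t => 1 - F t) (Set.Ioi 0)) :
    upperMat (fun x => (∫ t in Set.Ioi x, (1 - F t)) / EB)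
      ≤ upperMat (fun x => 1 - F x) + 1 ∧
    lowerMat (fun x => 1 - F x) + 1
      ≤ lowerMat (fun x => (∫ t in Set.Ioi x, (1 - F t)) / EB) :=
  ⟨upperMat_le_add_of_forall_mem fun _ ha =>
      upperMatSet_subset_div_const hEBpos.le (add_one_mem_upperMatSet_integral_Ioi hInt ha),
    add_le_lowerMat_of_forall_mem fun _ hb =>
      lowerMatSet_subset_div_const hEBpos.le (add_one_mem_lowerMatSet_integral_Ioi hInt hb)⟩

/-- Let `F` be the c.d.f. of a nonnegative random variable with `F 0 = 0`,
finite positive mean `EB = ∫₀^∞ (1 - F)`, and unbounded support (`F x < 1` for all `x`).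
If `β(1 - F) > -∞`, then `α(1 - G) ≤ α(1 - F) + 1` and `β(1 - G) ≥ β(1 - F) + 1`,
where `1 - G` is the tail `x ↦ (1/EB) ∫ₓ^∞ (1 - F)` of the equilibrium distribution. -/
theorem stmt4 (F : ℝ → ℝ) (hmono : Monotone F) (hF0 : F 0 = 0)
    (hFlt : ∀ x, F x < 1) (hFnn : ∀ x, 0 ≤ F x)
    (EB : ℝ) (hEBpos : 0 < EB)
    (hInt : IntegrableOn (fun t => 1 - F t) (Set.Ioi 0))
    (hEB : EB = ∫ t in Set.Ioi (0 : ℝ), (1 - F t))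
    (hβ : (⊥ : EReal) < lowerMat (fun x => 1 - F x)) :
    upperMat (fun x => (∫ t in Set.Ioi x, (1 - F t)) / EB)
      ≤ upperMat (fun x => 1 - F x) + 1 ∧
    lowerMat (fun x => 1 - F x) + 1
      ≤ lowerMat (fun x => (∫ t in Set.Ioi x, (1 - F t)) / EB) :=
  stmt4_general F EB hEBpos hInt
end

section
/- With F, G, h* as above and G⁻¹ the right-continuous inverse of G, the identity E[B]·h*(x) = exp(∫_{G⁻¹(F(x))}^{x} h*(t) dt) holds for all x in the interior of the support, provided F is continuous and strictly increasing there. -/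
/-!
With the tail integral `H t = ∫ₜ^∞ F̄`, one has `h* = F̄ / H`, and off the countably many jumps of
the monotone `F` this is the derivative of `-log H`. So `∫_c^x h* = log H(c) - log H(x)`.
For `c = G⁻¹(F x)`, continuity of `G` gives `G(c) = F(x)`, i.e. `H(c) = EB · F̄(x)`, and
exponentiating yields `EB · F̄(x) / H(x) = EB · h*(x)`.
-/

open Filter Set MeasureTheory

/-- The equilibrium failure rate `h*(x) = F̄(x) / (EB · Ḡ(x)) = F̄(x) / ∫ₓ^∞ F̄(t) dt`. -/
noncomputable def hstar (F : ℝ → ℝ) (x : ℝ) : ℝ :=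
  (1 - F x) / (∫ t in Set.Ioi x, (1 - F t))

/-- The equilibrium distribution function `G(x) = (1/EB) ∫₀ˣ F̄(t) dt`. -/
noncomputable def eqG (F : ℝ → ℝ) (EB : ℝ) (x : ℝ) : ℝ :=
  (∫ t in Set.Ioc (0 : ℝ) x, (1 - F t)) / EB

/-- The right-continuous inverse `G⁻¹(y) = inf {x : G(x) ≥ y}`. -/
noncomputable def eqGinv (F : ℝ → ℝ) (EB : ℝ) (y : ℝ) : ℝ :=
  sInf {x : ℝ | y ≤ eqG F EB x}

open scoped Topology

noncomputable def tailIntegral (f : ℝ → ℝ) (t : ℝ) : ℝ :=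
  ∫ s in Ioi t, f s

section TailIntegral

variable {f : ℝ → ℝ}

theorem Antitone.integrableOn_Ioi (hf : Antitone f) {a : ℝ} (ha : IntegrableOn f (Ioi a))
    (b : ℝ) : IntegrableOn f (Ioi b) := by
  refine ((hf.locallyIntegrable.integrableOn_isCompact
    (isCompact_Icc (a := b) (b := a))).union ha).mono_set fun t ht => ?_
  rcases le_or_gt t a with hta | hta
  · exact Or.inl ⟨le_of_lt ht, hta⟩
  · exact Or.inr hta

theorem intervalIntegrable_of_forall_integrableOn_Ioi (hfi : ∀ t, IntegrableOn f (Ioi t))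
    (u v : ℝ) : IntervalIntegrable f volume u v :=
  intervalIntegrable_iff.2 ((hfi (min u v)).mono_set Ioc_subset_Ioi_self)

theorem tailIntegral_eq_intervalIntegral_add (hfi : ∀ t, IntegrableOn f (Ioi t)) (u v : ℝ) :
    tailIntegral f u = (∫ s in u..v, f s) + tailIntegral f v :=
  (intervalIntegral.integral_interval_add_Ioi (hfi u) (hfi v)).symm

theorem tailIntegral_eq_sub_intervalIntegral (hfi : ∀ t, IntegrableOn f (Ioi t)) (t : ℝ) :
    tailIntegral f t = tailIntegral f 0 - ∫ s in (0 : ℝ)..t, f s := by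
  rw [tailIntegral_eq_intervalIntegral_add hfi t 0, intervalIntegral.integral_symm]
  ring

theorem continuous_tailIntegral (hfi : ∀ t, IntegrableOn f (Ioi t)) :
    Continuous (tailIntegral f) := by
  rw [funext (tailIntegral_eq_sub_intervalIntegral hfi)]
  exact continuous_const.sub (intervalIntegral.continuous_primitive
    (intervalIntegrable_of_forall_integrableOn_Ioi hfi) 0)

theorem hasDerivAt_tailIntegral (hfi : ∀ t, IntegrableOn f (Ioi t)) {t : ℝ}
    (ht : ContinuousAt f t) : HasDerivAt (tailIntegral f) (-f t) t := by
  have hmeas : StronglyMeasurableAtFilter f (𝓝 t) :=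
    AEStronglyMeasurable.stronglyMeasurableAtFilter_of_mem (hfi (t - 1)).aestronglyMeasurable
      (Ioi_mem_nhds (by linarith))
  have hprim := intervalIntegral.integral_hasDerivAt_right
    (intervalIntegrable_of_forall_integrableOn_Ioi hfi 0 t) hmeas ht
  rw [funext (tailIntegral_eq_sub_intervalIntegral hfi), ← zero_sub]
  exact (hasDerivAt_const t _).sub hprim

theorem antitone_tailIntegral (hfi : ∀ t, IntegrableOn f (Ioi t)) (hf0 : ∀ t, 0 ≤ f t) :
    Antitone (tailIntegral f) := by
  intro u v huv
  rw [tailIntegral_eq_intervalIntegral_add hfi u v, le_add_iff_nonneg_left]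
  exact intervalIntegral.integral_nonneg huv fun t _ => hf0 t

theorem Antitone.tailIntegral_pos (hf : Antitone f) (hfi : ∀ t, IntegrableOn f (Ioi t))
    (hf0 : ∀ t, 0 ≤ f t) {u v : ℝ} (huv : u < v) (hv : 0 < f v) : 0 < tailIntegral f u := by
  rw [tailIntegral_eq_intervalIntegral_add hfi u v]
  refine add_pos_of_pos_of_nonneg ?_ (setIntegral_nonneg measurableSet_Ioi fun t _ => hf0 t)
  exact intervalIntegral.intervalIntegral_pos_of_pos_on
    (intervalIntegrable_of_forall_integrableOn_Ioi hfi u v)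
    (fun t ht => hv.trans_le (hf ht.2.le)) huv

theorem Antitone.exp_integral_div_tailIntegral (hf : Antitone f)
    (hfi : ∀ t, IntegrableOn f (Ioi t)) (hf0 : ∀ t, 0 ≤ f t) {u v : ℝ}
    (hu : 0 < tailIntegral f u) (hv : 0 < tailIntegral f v) :
    Real.exp (∫ t in u..v, f t / tailIntegral f t) = tailIntegral f u / tailIntegral f v := by
  have hpos : ∀ t ∈ uIcc u v, 0 < tailIntegral f t := by
    intro t ht
    rcases max_choice u v with h | h
    · exact hu.trans_le (h ▸ antitone_tailIntegral hfi hf0 ht.2)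
    · exact hv.trans_le (h ▸ antitone_tailIntegral hfi hf0 ht.2)
  have hH := continuous_tailIntegral hfi
  have hint : IntervalIntegrable (fun t => f t / tailIntegral f t) volume u v := by
    simp only [div_eq_mul_inv]
    exact (intervalIntegrable_of_forall_integrableOn_Ioi hfi u v).mul_continuousOn
      (hH.continuousOn.inv₀ fun t ht => (hpos t ht).ne')
  -- `f` is monotone, so it is continuous off a countable set, where `-log H` has derivative `f / H`
  have hFTC : ∫ t in u..v, f t / tailIntegral f t
      = -Real.log (tailIntegral f v) - -Real.log (tailIntegral f u) := by
    refine integral_eq_of_hasDerivAt_off_countable _ _ hf.countable_not_continuousAt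
      (hH.continuousOn.log fun t ht => (hpos t ht).ne').neg (fun t ht => ?_) hint
    have hlog := ((hasDerivAt_tailIntegral hfi (not_not.1 ht.2)).log
      (hpos t (Ioo_subset_Icc_self ht.1)).ne').neg
    rwa [neg_div, neg_neg] at hlog
  rw [hFTC, neg_sub_neg, Real.exp_sub, Real.exp_log hu, Real.exp_log hv]

end TailIntegral

theorem Continuous.apply_csInf_setOf_le {g : ℝ → ℝ} (hg : Continuous g) {y : ℝ}
    (hne : {u | y ≤ g u}.Nonempty) (hbdd : BddBelow {u | y ≤ g u}) :
    g (sInf {u | y ≤ g u}) = y := by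
  set c := sInf {u | y ≤ g u}
  have hc : y ≤ g c := (isClosed_le continuous_const hg).csInf_mem hne hbdd
  refine le_antisymm (not_lt.1 fun hlt => ?_) hc
  have hleft : ∀ᶠ u in 𝓝[<] c, y ≤ g u ∧ u < c :=
    (((hg.tendsto c).eventually (eventually_ge_nhds hlt)).filter_mono nhdsWithin_le_nhds).and
      self_mem_nhdsWithin
  obtain ⟨u, hu, huc⟩ := hleft.exists
  exact (csInf_le hbdd hu).not_gt huc

section EquilibriumDistribution

variable {F : ℝ → ℝ} {EB : ℝ}

theorem eqG_eq_intervalIntegral (u : ℝ) :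
    eqG F EB u = (∫ t in (0 : ℝ)..max 0 u, (1 - F t)) / EB := by
  rw [eqG, intervalIntegral.integral_of_le (le_max_left 0 u)]
  rcases le_total u 0 with hu | hu
  · rw [max_eq_left hu, Ioc_eq_empty (not_lt.2 hu), Ioc_self]
  · rw [max_eq_right hu]

theorem eqG_of_nonpos {u : ℝ} (hu : u ≤ 0) : eqG F EB u = 0 := by
  rw [eqG_eq_intervalIntegral, max_eq_left hu, intervalIntegral.integral_same, zero_div]

theorem continuous_eqG (hF : Monotone F) : Continuous (eqG F EB) := by
  have hf : Antitone fun t => 1 - F t := fun u v h => sub_le_sub_left (hF h) 1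
  rw [funext eqG_eq_intervalIntegral]
  exact ((intervalIntegral.continuous_primitive (fun u v => hf.intervalIntegrable) 0).comp
    (continuous_const.max continuous_id)).div_const EB

theorem tendsto_eqG_atTop (hInt : IntegrableOn (fun t => 1 - F t) (Ioi 0))
    (hEB : EB = ∫ t in Ioi (0 : ℝ), (1 - F t)) (hEBpos : 0 < EB) :
    Tendsto (eqG F EB) atTop (𝓝 1) := by
  have h := (intervalIntegral_tendsto_integral_Ioi 0 hInt tendsto_id).div_const EB
  rw [← hEB, div_self hEBpos.ne'] at h
  refine h.congr' ?_
  filter_upwards [eventually_ge_atTop 0] with u hu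
  rw [eqG_eq_intervalIntegral, max_eq_right hu, id]

theorem eqG_eqGinv (hF : Monotone F) (hInt : IntegrableOn (fun t => 1 - F t) (Ioi 0))
    (hEB : EB = ∫ t in Ioi (0 : ℝ), (1 - F t)) (hEBpos : 0 < EB) {y : ℝ} (hy0 : 0 < y)
    (hy1 : y < 1) : eqG F EB (eqGinv F EB y) = y := by
  refine (continuous_eqG hF).apply_csInf_setOf_le
    ((tendsto_eqG_atTop hInt hEB hEBpos).eventually (eventually_ge_nhds hy1)).exists
    ⟨0, fun u hu => le_of_not_ge fun h => ?_⟩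
  exact (eqG_of_nonpos (F := F) (EB := EB) h ▸ hu : y ≤ 0).not_gt hy0

theorem tailIntegral_eqGinv (hF : Monotone F) (hInt : IntegrableOn (fun t => 1 - F t) (Ioi 0))
    (hEB : EB = ∫ t in Ioi (0 : ℝ), (1 - F t)) (hEBpos : 0 < EB) {y : ℝ} (hy0 : 0 < y)
    (hy1 : y < 1) : tailIntegral (fun t => 1 - F t) (eqGinv F EB y) = EB * (1 - y) := by
  have hf : Antitone fun t => 1 - F t := fun u v h => sub_le_sub_left (hF h) 1
  have hGc := eqG_eqGinv hF hInt hEB hEBpos hy0 hy1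
  have hc : 0 ≤ eqGinv F EB y := le_of_not_ge fun h => hy0.ne' (hGc ▸ eqG_of_nonpos h)
  rw [eqG_eq_intervalIntegral, max_eq_right hc, div_eq_iff hEBpos.ne'] at hGc
  rw [tailIntegral_eq_sub_intervalIntegral (hf.integrableOn_Ioi hInt), hGc, tailIntegral, ← hEB]
  ring

end EquilibriumDistribution

theorem hstar_eq_div_tailIntegral (F : ℝ → ℝ) :
    hstar F = fun t => (1 - F t) / tailIntegral (fun s => 1 - F s) t :=
  rfl

theorem stmt7_general (F : ℝ → ℝ) (hmono : Monotone F)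
    (hFle : ∀ x, F x ≤ 1)
    (EB : ℝ) (hEBpos : 0 < EB)
    (hInt : IntegrableOn (fun t => 1 - F t) (Set.Ioi 0))
    (hEB : EB = ∫ t in Set.Ioi (0 : ℝ), (1 - F t))
    (a b : ℝ)
    (hsupp : ∀ x ∈ Set.Ioo a b, 0 < F x ∧ F x < 1) :
    ∀ x ∈ Set.Ioo a b,
      EB * hstar F x = Real.exp (∫ t in eqGinv F EB (F x)..x, hstar F t) := by
  intro x hx
  have hf : Antitone fun t => 1 - F t := fun u v h => sub_le_sub_left (hmono h) 1
  have hfi := hf.integrableOn_Ioi hInt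
  have hf0 : ∀ t, 0 ≤ 1 - F t := fun t => sub_nonneg.2 (hFle t)
  obtain ⟨hFx0, hFx1⟩ := hsupp x hx
  have hHc := tailIntegral_eqGinv hmono hInt hEB hEBpos hFx0 hFx1
  have hHc_pos : 0 < tailIntegral (fun t => 1 - F t) (eqGinv F EB (F x)) :=
    hHc ▸ mul_pos hEBpos (sub_pos.2 hFx1)
  have hHx_pos : 0 < tailIntegral (fun t => 1 - F t) x := by
    have hmid : (x + b) / 2 ∈ Ioo a b := ⟨by linarith [hx.1, hx.2], by linarith [hx.2]⟩
    exact hf.tailIntegral_pos hfi hf0 (by linarith [hx.2]) (sub_pos.2 (hsupp _ hmid).2)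
  rw [hstar_eq_div_tailIntegral, hf.exp_integral_div_tailIntegral hfi hf0 hHc_pos hHx_pos, hHc,
    mul_div_assoc]

/-- For a nonnegative random variable with c.d.f. `F` (with `F 0 = 0` and
finite positive mean `EB`) that is continuous and strictly increasing on an interval
`(a, b)` in the interior of its support, the identity
`EB · h*(x) = exp (∫_{G⁻¹(F x)}^{x} h*(t) dt)` holds for all `x ∈ (a, b)`. -/
theorem stmt7 (F : ℝ → ℝ) (hmono : Monotone F) (hF0 : F 0 = 0)
    (hFnn : ∀ x, 0 ≤ F x) (hFle : ∀ x, F x ≤ 1)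
    (EB : ℝ) (hEBpos : 0 < EB)
    (hInt : IntegrableOn (fun t => 1 - F t) (Set.Ioi 0))
    (hEB : EB = ∫ t in Set.Ioi (0 : ℝ), (1 - F t))
    (a b : ℝ) (hab : a < b) (hco : ContinuousOn F (Set.Ioo a b))
    (hsm : StrictMonoOn F (Set.Ioo a b))
    (hsupp : ∀ x ∈ Set.Ioo a b, 0 < F x ∧ F x < 1) :
    ∀ x ∈ Set.Ioo a b,
      EB * hstar F x = Real.exp (∫ t in eqGinv F EB (F x)..x, hstar F t) :=
  stmt7_general F hmono hFle EB hEBpos hInt hEB a b hsupp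
end

section
/- Suppose F ∈ MDA(Λ) (the maximum domain of attraction of the Gumbel distribution) with auxiliary function f satisfying lim_{x↑x_R} Ḡ(x + t f(x))/Ḡ(x) = e^{-t} for all t where Ḡ is replaced by F̄. Then the equilibrium distribution G also belongs to MDA(Λ) with the same auxiliary function f; i.e., lim_{x↑x_R} Ḡ(x + t f(x))/Ḡ(x) = e^{-t} for all t ∈ ℝ. -/
/-!
Write `Ḡ x = ∫ s in Ioi x, F̄ s`. For fixed `t, s`, the substitution `u = x + v f(x)` and
dominated convergence give `(Ḡ(x + t f(x)) - Ḡ(x + s f(x))) / (f(x) F̄(x)) → e^{-t} - e^{-s}`.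
A chain argument bounds the rest, `Ḡ(x + T f(x)) ≤ 64 e^{-T} f(x) F̄(x)` eventually, so letting
`T → ∞` gives `Ḡ(x) ~ f(x) F̄(x)`, and the claim follows by taking quotients.
-/

open Filter Set MeasureTheory Topology Real

lemma Antitone.integrableOn_Ioi_s8 {g : ℝ → ℝ} {a : ℝ} (hg : Antitone g)
    (h : IntegrableOn g (Ioi a)) (b : ℝ) : IntegrableOn g (Ioi b) :=
  ((hg.intervalIntegrable (μ := volume) (a := a) (b := b)).2.union h).mono_set fun y hy => by
    by_cases hya : y ≤ a
    · exact Or.inl ⟨hy, hya⟩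
    · exact Or.inr (not_le.1 hya)

/-- For `g = F̄` this is `E[B] · Ḡ` in the notation of the paper. -/
noncomputable def integratedTail (g : ℝ → ℝ) (x : ℝ) : ℝ := ∫ s in Ioi x, g s

namespace integratedTail

variable {g : ℝ → ℝ}

lemma sub_eq_intervalIntegral (hint : ∀ c, IntegrableOn g (Ioi c)) (a b : ℝ) :
    integratedTail g a - integratedTail g b = ∫ s in a..b, g s :=
  intervalIntegral.integral_Ioi_sub_Ioi' (hint a) (hint b)

lemma sub_le (hg : Antitone g) (hint : ∀ c, IntegrableOn g (Ioi c)) {a b : ℝ} (hab : a ≤ b) :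
    integratedTail g a - integratedTail g b ≤ (b - a) * g a := by
  rw [sub_eq_intervalIntegral hint, ← smul_eq_mul, ← intervalIntegral.integral_const]
  exact intervalIntegral.integral_mono_on hab (hg.intervalIntegrable) intervalIntegrable_const
    fun s hs => hg hs.1

lemma antitone (hg0 : ∀ x, 0 ≤ g x) (hint : ∀ c, IntegrableOn g (Ioi c)) :
    Antitone (integratedTail g) := fun a b hab => by
  have := intervalIntegral.integral_nonneg (μ := volume) hab fun s _ => hg0 s
  linarith [sub_eq_intervalIntegral hint a b]

lemma nonneg (hg0 : ∀ x, 0 ≤ g x) (x : ℝ) : 0 ≤ integratedTail g x :=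
  setIntegral_nonneg measurableSet_Ioi fun s _ => hg0 s

lemma tendsto_atTop (hint : ∀ c, IntegrableOn g (Ioi c)) :
    Tendsto (integratedTail g) atTop (𝓝 0) := by
  have h : Tendsto (fun b => integratedTail g 0 - ∫ s in (0 : ℝ)..b, g s) atTop
      (𝓝 (integratedTail g 0 - integratedTail g 0)) :=
    (intervalIntegral_tendsto_integral_Ioi 0 (hint 0) tendsto_id).const_sub _
  rw [sub_self] at h
  refine h.congr fun b => ?_
  rw [← sub_eq_intervalIntegral hint, sub_sub_cancel]

/-- For any `z`, the tail at `Y n` is at most `|z - Y 0| * g (Y n)` plus the tail at `z`. -/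
lemma tendsto_comp_of_tendsto (hg : Antitone g) (hg0 : ∀ x, 0 ≤ g x)
    (hint : ∀ c, IntegrableOn g (Ioi c)) {Y : ℕ → ℝ} (hY : Monotone Y)
    (hgY : Tendsto (fun n => g (Y n)) atTop (𝓝 0)) :
    Tendsto (fun n => integratedTail g (Y n)) atTop (𝓝 0) := by
  have hbound : ∀ z n, integratedTail g (Y n) ≤ |z - Y 0| * g (Y n) + integratedTail g z := by
    intro z n
    rcases le_total z (Y n) with hz | hz
    · linarith [antitone hg0 hint hz, mul_nonneg (abs_nonneg (z - Y 0)) (hg0 (Y n))]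
    · have h1 := sub_le hg hint hz
      have h2 : (z - Y n) * g (Y n) ≤ |z - Y 0| * g (Y n) :=
        mul_le_mul_of_nonneg_right ((sub_le_sub_left (hY (Nat.zero_le n)) z).trans
          (le_abs_self _)) (hg0 _)
      linarith
  rw [Metric.tendsto_atTop]
  intro ε hε
  obtain ⟨z, hz⟩ := ((tendsto_atTop hint).eventually (gt_mem_nhds (half_pos hε))).exists
  have hsmall : ∀ᶠ n in atTop, |z - Y 0| * g (Y n) < ε / 2 := by
    have h := hgY.const_mul |z - Y 0|
    rw [mul_zero] at h
    exact h.eventually (gt_mem_nhds (half_pos hε))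
  obtain ⟨N, hN⟩ := eventually_atTop.1 hsmall
  refine ⟨N, fun n hn => ?_⟩
  rw [Real.dist_eq, sub_zero, abs_of_nonneg (nonneg hg0 _)]
  linarith [hbound z n, hN n hn]

lemma le_of_sub_le_geometric (hg : Antitone g) (hg0 : ∀ x, 0 ≤ g x)
    (hint : ∀ c, IntegrableOn g (Ioi c)) {Y : ℕ → ℝ} (hY : Monotone Y)
    (hgY : Tendsto (fun n => g (Y n)) atTop (𝓝 0)) {C : ℝ}
    (hC : ∀ k, integratedTail g (Y k) - integratedTail g (Y (k + 1)) ≤ C * (1 / 2) ^ k) :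
    integratedTail g (Y 0) ≤ 2 * C := by
  have hC0 : 0 ≤ C := by
    simpa using (sub_nonneg.2 (antitone hg0 hint (hY (Nat.zero_le 1)))).trans (hC 0)
  have hpartial : ∀ n, integratedTail g (Y 0) - integratedTail g (Y n) ≤ 2 * C := fun n =>
    calc integratedTail g (Y 0) - integratedTail g (Y n)
        = ∑ k ∈ Finset.range n, (integratedTail g (Y k) - integratedTail g (Y (k + 1))) :=
          (Finset.sum_range_sub' (fun k => integratedTail g (Y k)) n).symm
      _ ≤ ∑ k ∈ Finset.range n, C * (1 / 2) ^ k := Finset.sum_le_sum fun k _ => hC k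
      _ ≤ C * 2 := by
          rw [← Finset.mul_sum]
          exact mul_le_mul_of_nonneg_left (sum_geometric_two_le n) hC0
      _ = 2 * C := mul_comm _ _
  have hlim := (tendsto_comp_of_tendsto hg hg0 hint hY hgY).const_sub (integratedTail g (Y 0))
  rw [sub_zero] at hlim
  exact le_of_tendsto' hlim hpartial

end integratedTail

/-- The filter `x ↑ x_R`, where `x_R ≤ ∞` is the right endpoint of the support of `g`. -/
def IsRightEndpointFilter (g : ℝ → ℝ) (l : Filter ℝ) : Prop :=
  (l = atTop ∧ ∀ x, 0 < g x) ∨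
    ∃ xR, l = 𝓝[<] xR ∧ (∀ x < xR, 0 < g x) ∧ ∀ x ≥ xR, g x = 0

namespace IsRightEndpointFilter

variable {g : ℝ → ℝ} {l : Filter ℝ}

lemma eventually_pos (hl : IsRightEndpointFilter g l) : ∀ᶠ x in l, 0 < g x := by
  rcases hl with ⟨rfl, hpos⟩ | ⟨xR, rfl, hpos, -⟩
  · exact Eventually.of_forall hpos
  · exact eventually_mem_nhdsWithin.mono hpos

lemma isCountablyGenerated (hl : IsRightEndpointFilter g l) : l.IsCountablyGenerated := by
  rcases hl with ⟨rfl, -⟩ | ⟨xR, rfl, -⟩ <;> infer_instance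

lemma exists_forall_ge (hl : IsRightEndpointFilter g l) {p : ℝ → Prop}
    (hp : ∀ᶠ x in l, p x) : ∃ a, (∀ᶠ x in l, a ≤ x) ∧ ∀ y, a ≤ y → 0 < g y → p y := by
  rcases hl with ⟨rfl, -⟩ | ⟨xR, rfl, -, hzero⟩
  · obtain ⟨a, ha⟩ := eventually_atTop.1 hp
    exact ⟨a, eventually_ge_atTop a, fun y hy _ => ha y hy⟩
  · obtain ⟨a, ha, hsub⟩ := mem_nhdsLT_iff_exists_Ico_subset.1 hp
    refine ⟨a, mem_of_superset (Ico_mem_nhdsLT ha) fun x hx => hx.1,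
      fun y hay hgy => hsub ⟨hay, ?_⟩⟩
    by_contra hy
    exact hgy.ne' (hzero y (not_lt.1 hy))

end IsRightEndpointFilter

def IsGumbelAuxiliary (g f : ℝ → ℝ) (l : Filter ℝ) : Prop :=
  ∀ t : ℝ, Tendsto (fun x => g (x + t * f x) / g x) l (𝓝 (exp (-t)))

def RatioBounds (g f : ℝ → ℝ) (u y : ℝ) : Prop :=
  exp (-u) / 2 * g y ≤ g (y + u * f y) ∧ g (y + u * f y) ≤ 2 * exp (-u) * g y

lemma two_pow_lt_exp {n : ℕ} (hn : n ≠ 0) : (2 : ℝ) ^ n < exp n := by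
  rw [← exp_one_pow]
  exact pow_lt_pow_left₀ (by linarith [add_one_lt_exp one_ne_zero]) zero_le_two hn

section GumbelAuxiliary

variable {g f : ℝ → ℝ} {l : Filter ℝ}

lemma IsGumbelAuxiliary.eventually_ratioBounds (hpos : ∀ᶠ x in l, 0 < g x)
    (haux : IsGumbelAuxiliary g f l) (u : ℝ) : ∀ᶠ x in l, RatioBounds g f u x := by
  have he := exp_pos (-u)
  have hmem : Ioo (exp (-u) / 2) (2 * exp (-u)) ∈ 𝓝 (exp (-u)) :=
    Ioo_mem_nhds (by linarith) (by linarith)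
  filter_upwards [hpos, (haux u).eventually hmem] with x hx hratio
  rw [lt_div_iff₀ hx, div_lt_iff₀ hx] at hratio
  exact ⟨hratio.1.le, hratio.2.le⟩

lemma IsGumbelAuxiliary.eventually_pos (hg : Antitone g) (hpos : ∀ᶠ x in l, 0 < g x)
    (haux : IsGumbelAuxiliary g f l) : ∀ᶠ x in l, 0 < f x := by
  have he : 2 * exp (-1) < 1 := by
    rw [exp_neg, ← div_eq_mul_inv, div_lt_one (exp_pos 1)]
    simpa using two_pow_lt_exp one_ne_zero
  filter_upwards [hpos, haux.eventually_ratioBounds hpos 1] with x hx hbound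
  by_contra! hf
  have : g x ≤ g (x + 1 * f x) := hg (by linarith)
  linarith [hbound.2, mul_lt_of_lt_one_left hx he]

/-- Otherwise `z + f z` lies beyond `y + (T + 4) f y` for `z = y + T f y`, and the ratio bounds
give `e⁻¹ / 4 ≤ 2 e⁻⁴`. -/
lemma le_four_mul_of_ratioBounds (hg : Antitone g) {y T : ℝ} (hgy : 0 < g y)
    (hT : RatioBounds g f T y) (hT4 : RatioBounds g f (T + 4) y)
    (h1 : RatioBounds g f 1 (y + T * f y)) : f (y + T * f y) ≤ 4 * f y := by
  by_contra! hjump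
  set z := y + T * f y
  have hle : g (z + 1 * f z) ≤ g (y + (T + 4) * f y) := hg (by simp only [z]; linarith)
  have hexp : exp (-(T + 4)) = exp (-T) * exp (-1) * exp (-3) := by
    rw [← exp_add, ← exp_add]; ring_nf
  have he3 : 8 * exp (-3) < 1 := by
    rw [exp_neg, ← div_eq_mul_inv, div_lt_one (exp_pos 3)]
    exact_mod_cast two_pow_lt_exp (n := 3) (by norm_num)
  have hchain : exp (-1) / 2 * (exp (-T) / 2 * g y) ≤ 2 * exp (-(T + 4)) * g y :=
    calc exp (-1) / 2 * (exp (-T) / 2 * g y) ≤ exp (-1) / 2 * g z :=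
          mul_le_mul_of_nonneg_left hT.1 (by positivity)
      _ ≤ g (z + 1 * f z) := h1.1
      _ ≤ _ := hle.trans hT4.2
  rw [hexp] at hchain
  have hP : 0 < exp (-T) * exp (-1) * g y := by positivity
  nlinarith

def stepChain (f : ℝ → ℝ) (y : ℝ) (k : ℕ) : ℝ := (fun z => z + 4 * f z)^[k] y

lemma stepChain_zero (f : ℝ → ℝ) (y : ℝ) : stepChain f y 0 = y := rfl

lemma stepChain_succ (f : ℝ → ℝ) (y : ℝ) (k : ℕ) :
    stepChain f y (k + 1) = stepChain f y k + 4 * f (stepChain f y k) :=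
  Function.iterate_succ_apply' _ _ _

lemma stepChain_bounds (hg : Antitone g) {a : ℝ}
    (hgood : ∀ y, a ≤ y → 0 < g y →
      0 < f y ∧ RatioBounds g f 1 y ∧ RatioBounds g f 4 y ∧ RatioBounds g f 8 y)
    {y : ℝ} (hay : a ≤ y) (hgy : 0 < g y) (k : ℕ) :
    a ≤ stepChain f y k ∧ 0 < g (stepChain f y k) ∧ f (stepChain f y k) ≤ 4 ^ k * f y ∧
      g (stepChain f y k) ≤ (2 * exp (-4)) ^ k * g y := by
  induction k with
  | zero => simp [stepChain_zero, hay, hgy]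
  | succ k ih =>
    obtain ⟨hak, hgk, hfk, hgk'⟩ := ih
    set w := stepChain f y k
    obtain ⟨hfw, -, h4, h8⟩ := hgood w hak hgk
    rw [stepChain_succ]
    have hak' : a ≤ w + 4 * f w := by linarith
    have hgk1 : 0 < g (w + 4 * f w) := lt_of_lt_of_le (by positivity) h4.1
    have hstep := le_four_mul_of_ratioBounds hg hgk h4 (by norm_num; exact h8)
      (hgood _ hak' hgk1).2.1
    refine ⟨hak', hgk1, ?_, ?_⟩
    · calc f (w + 4 * f w) ≤ 4 * (4 ^ k * f y) := by linarith
        _ = 4 ^ (k + 1) * f y := by ring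
    · calc g (w + 4 * f w) ≤ 2 * exp (-4) * ((2 * exp (-4)) ^ k * g y) :=
          h4.2.trans (mul_le_mul_of_nonneg_left hgk' (by positivity))
        _ = (2 * exp (-4)) ^ (k + 1) * g y := by ring

/-- Along `stepChain f y` the tail `g` decays by the factor `2 e⁻⁴` per step while `f` grows at
most by the factor `4`, so the slabs of the integrated tail decay geometrically. -/
lemma integratedTail_le_of_ratioBounds (hg : Antitone g) (hg0 : ∀ x, 0 ≤ g x)
    (hint : ∀ c, IntegrableOn g (Ioi c)) {a : ℝ}
    (hgood : ∀ y, a ≤ y → 0 < g y →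
      0 < f y ∧ RatioBounds g f 1 y ∧ RatioBounds g f 4 y ∧ RatioBounds g f 8 y)
    {y : ℝ} (hay : a ≤ y) (hgy : 0 < g y) : integratedTail g y ≤ 8 * (f y * g y) := by
  have hbounds := stepChain_bounds hg hgood hay hgy
  have hq : 4 * (2 * exp (-4)) ≤ 1 / 2 := by
    have h16 : (16 : ℝ) < exp 4 := by exact_mod_cast two_pow_lt_exp (n := 4) (by norm_num)
    rw [show 4 * (2 * exp (-4)) = 8 / exp 4 by rw [exp_neg]; ring, div_le_iff₀ (exp_pos 4)]
    linarith
  have hmono : Monotone (stepChain f y) := monotone_nat_of_le_succ fun k => by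
    rw [stepChain_succ]
    linarith [(hgood _ (hbounds k).1 (hbounds k).2.1).1]
  have hgY : Tendsto (fun n => g (stepChain f y n)) atTop (𝓝 0) := by
    refine squeeze_zero (fun n => hg0 _) (fun n => (hbounds n).2.2.2) ?_
    simpa using (tendsto_pow_atTop_nhds_zero_of_lt_one (by positivity) (by linarith)).mul_const
      (g y)
  have hfy : 0 < f y := (hgood y hay hgy).1
  have hdrop : ∀ k, integratedTail g (stepChain f y k) - integratedTail g (stepChain f y (k + 1))
      ≤ 4 * (f y * g y) * (1 / 2) ^ k := fun k =>
    calc integratedTail g (stepChain f y k) - integratedTail g (stepChain f y (k + 1))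
        ≤ (stepChain f y (k + 1) - stepChain f y k) * g (stepChain f y k) :=
          integratedTail.sub_le hg hint (hmono k.le_succ)
      _ = 4 * (f (stepChain f y k) * g (stepChain f y k)) := by rw [stepChain_succ]; ring
      _ ≤ 4 * ((4 ^ k * f y) * ((2 * exp (-4)) ^ k * g y)) := by
          gcongr 4 * ?_
          exact mul_le_mul (hbounds k).2.2.1 (hbounds k).2.2.2 (hg0 _) (by positivity)
      _ = 4 * (f y * g y) * (4 * (2 * exp (-4))) ^ k := by rw [mul_pow, mul_pow]; ring
      _ ≤ 4 * (f y * g y) * (1 / 2) ^ k := by gcongr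
  have := integratedTail.le_of_sub_le_geometric hg hg0 hint hmono hgY hdrop
  rw [stepChain_zero] at this
  linarith

lemma eventually_integratedTail_le (hg : Antitone g) (hg0 : ∀ x, 0 ≤ g x)
    (hint : ∀ c, IntegrableOn g (Ioi c)) (hl : IsRightEndpointFilter g l)
    (haux : IsGumbelAuxiliary g f l) {T : ℝ} (hT : 0 ≤ T) :
    ∀ᶠ x in l, integratedTail g (x + T * f x) ≤ 64 * exp (-T) * (f x * g x) := by
  have hpos := hl.eventually_pos
  have hf := haux.eventually_pos hg hpos
  obtain ⟨a, hla, hgood⟩ := hl.exists_forall_ge <| hf.and <|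
    (haux.eventually_ratioBounds hpos 1).and <|
      (haux.eventually_ratioBounds hpos 4).and (haux.eventually_ratioBounds hpos 8)
  filter_upwards [hla, hpos, hf, haux.eventually_ratioBounds hpos T,
    haux.eventually_ratioBounds hpos (T + 4)] with x hax hgx hfx hTx hT4x
  have haz : a ≤ x + T * f x := by nlinarith
  have hgz : 0 < g (x + T * f x) := lt_of_lt_of_le (by positivity) hTx.1
  have hfz := le_four_mul_of_ratioBounds hg hgx hTx hT4x (hgood _ haz hgz).2.1
  calc integratedTail g (x + T * f x) ≤ 8 * (f (x + T * f x) * g (x + T * f x)) :=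
        integratedTail_le_of_ratioBounds hg hg0 hint hgood haz hgz
    _ ≤ 8 * ((4 * f x) * (2 * exp (-T) * g x)) := by
        gcongr 8 * ?_
        exact mul_le_mul hfz hTx.2 hgz.le (by positivity)
    _ = 64 * exp (-T) * (f x * g x) := by ring

/-- Substituting `u = x + v f x` turns the quotient into `∫ v in t..s, g (x + v f x) / g x`,
whose integrand converges to `e^{-v}`, dominated by its value at `v = min t s`. -/
lemma tendsto_integratedTail_sub_div [l.IsCountablyGenerated] (hg : Antitone g)
    (hg0 : ∀ x, 0 ≤ g x) (hint : ∀ c, IntegrableOn g (Ioi c)) (hpos : ∀ᶠ x in l, 0 < g x)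
    (hf : ∀ᶠ x in l, 0 < f x) (haux : IsGumbelAuxiliary g f l) (t s : ℝ) :
    Tendsto (fun x => (integratedTail g (x + t * f x) - integratedTail g (x + s * f x)) /
      (f x * g x)) l (𝓝 (exp (-t) - exp (-s))) := by
  have hsubst : ∀ᶠ x in l, ∫ v in t..s, g (x + v * f x) / g x =
      (integratedTail g (x + t * f x) - integratedTail g (x + s * f x)) / (f x * g x) := by
    filter_upwards [hf] with x hfx
    rw [intervalIntegral.integral_div, integratedTail.sub_eq_intervalIntegral hint]
    simp_rw [mul_comm _ (f x)]
    rw [intervalIntegral.integral_comp_add_mul _ hfx.ne', smul_eq_mul, div_mul_eq_div_div,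
      inv_mul_eq_div]
  have hexp : ∫ v in t..s, exp (-v) = exp (-t) - exp (-s) := by simp
  rw [← hexp]
  refine Tendsto.congr' hsubst (intervalIntegral.tendsto_integral_filter_of_dominated_convergence
    (fun _ => 2 * exp (-min t s)) ?_ ?_ intervalIntegrable_const (ae_of_all _ fun v _ => haux v))
  · filter_upwards [hf] with x hfx
    have hmono : Monotone fun v => x + v * f x := fun v w hvw => by nlinarith
    exact ((hg.comp_monotone hmono).measurable.div_const _).aestronglyMeasurable
  · filter_upwards [hpos, hf, haux.eventually_ratioBounds hpos (min t s)] with x hgx hfx hmin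
    refine ae_of_all _ fun v hv => ?_
    have hle : g (x + v * f x) ≤ g (x + min t s * f x) := hg (by nlinarith [hv.1])
    rw [Real.norm_of_nonneg (div_nonneg (hg0 _) hgx.le), div_le_iff₀ hgx]
    exact hle.trans hmin.2

lemma tendsto_integratedTail_div_mul (hg : Antitone g) (hg0 : ∀ x, 0 ≤ g x)
    (hint : ∀ c, IntegrableOn g (Ioi c)) (hl : IsRightEndpointFilter g l)
    (haux : IsGumbelAuxiliary g f l) :
    Tendsto (fun x => integratedTail g x / (f x * g x)) l (𝓝 1) := by
  have := hl.isCountablyGenerated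
  have hpos := hl.eventually_pos
  have hf := haux.eventually_pos hg hpos
  rw [Metric.tendsto_nhds]
  intro ε hε
  have hsmall : Tendsto (fun T => 65 * exp (-T)) atTop (𝓝 0) := by
    simpa using tendsto_exp_neg_atTop_nhds_zero.const_mul 65
  obtain ⟨T, hT0, hTε⟩ :=
    ((eventually_ge_atTop 0).and (hsmall.eventually (gt_mem_nhds (half_pos hε)))).exists
  have hhead := tendsto_integratedTail_sub_div hg hg0 hint hpos hf haux 0 T
  filter_upwards [Metric.tendsto_nhds.1 hhead (ε / 2) (half_pos hε),
    eventually_integratedTail_le hg hg0 hint hl haux hT0, hpos, hf] with x hhx htx hgx hfx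
  simp only [zero_mul, add_zero, neg_zero, exp_zero] at hhx
  have hfg : 0 < f x * g x := mul_pos hfx hgx
  have htail0 : 0 ≤ integratedTail g (x + T * f x) / (f x * g x) :=
    div_nonneg (integratedTail.nonneg hg0 _) hfg.le
  have htail : integratedTail g (x + T * f x) / (f x * g x) ≤ 64 * exp (-T) := by
    rw [div_le_iff₀ hfg]; linarith
  have hsplit : integratedTail g x / (f x * g x) =
      (integratedTail g x - integratedTail g (x + T * f x)) / (f x * g x) +
        integratedTail g (x + T * f x) / (f x * g x) := by
    rw [← add_div, sub_add_cancel]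
  rw [Real.dist_eq] at hhx ⊢
  rw [hsplit]
  have := exp_pos (-T)
  rw [abs_lt] at hhx ⊢
  constructor <;> linarith [hhx.1, hhx.2]

theorem IsGumbelAuxiliary.integratedTail (hg : Antitone g) (hg0 : ∀ x, 0 ≤ g x)
    (hint : ∀ c, IntegrableOn g (Ioi c)) (hl : IsRightEndpointFilter g l)
    (haux : IsGumbelAuxiliary g f l) : IsGumbelAuxiliary (integratedTail g) f l := by
  intro t
  have := hl.isCountablyGenerated
  have hpos := hl.eventually_pos
  have hf := haux.eventually_pos hg hpos
  have hwhole := tendsto_integratedTail_div_mul hg hg0 hint hl haux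
  have hhead := tendsto_integratedTail_sub_div hg hg0 hint hpos hf haux 0 t
  have hlim := (hwhole.sub hhead).div hwhole one_ne_zero
  simp only [neg_zero, exp_zero, sub_sub_cancel, div_one] at hlim
  refine hlim.congr' ?_
  filter_upwards [hpos, hf] with x hgx hfx
  simp only [Pi.div_apply, zero_mul, add_zero]
  rw [← sub_div, sub_sub_cancel, div_div_div_cancel_right₀ (mul_pos hfx hgx).ne']

end GumbelAuxiliary

theorem stmt8_general (F f : ℝ → ℝ) (hmono : Monotone F)
    (hFle : ∀ x, F x ≤ 1)
    (hInt : IntegrableOn (fun t => 1 - F t) (Set.Ioi 0))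
    (l : Filter ℝ)
    (hl : (l = atTop ∧ ∀ x, F x < 1) ∨
      (∃ xR : ℝ, l = nhdsWithin xR (Set.Iio xR) ∧ (∀ x < xR, F x < 1) ∧ ∀ x ≥ xR, F x = 1))
    (haux : ∀ t : ℝ,
      Tendsto (fun x => (1 - F (x + t * f x)) / (1 - F x)) l (nhds (Real.exp (-t)))) :
    ∀ t : ℝ,
      Tendsto (fun x => (∫ s in Set.Ioi (x + t * f x), (1 - F s)) / (∫ s in Set.Ioi x, (1 - F s)))
        l (nhds (Real.exp (-t))) := by
  have hg : Antitone fun x => 1 - F x := fun a b hab => sub_le_sub_left (hmono hab) 1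
  have hl' : IsRightEndpointFilter (fun x => 1 - F x) l := by
    simpa only [IsRightEndpointFilter, sub_pos, sub_eq_zero, eq_comm (a := (1 : ℝ))] using hl
  exact IsGumbelAuxiliary.integratedTail hg (fun x => sub_nonneg.2 (hFle x))
    (hg.integrableOn_Ioi_s8 hInt) hl' haux

/-- If `F ∈ MDA(Λ)` with auxiliary function `f`, i.e.
`F̄(x + t f(x)) / F̄(x) → e^{-t}` as `x ↑ x_R` for every `t`, then the equilibrium
distribution `G` (with tail `Ḡ(x) = (1/EB) ∫ₓ^{x_R} F̄`) also satisfies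
`Ḡ(x + t f(x)) / Ḡ(x) → e^{-t}` as `x ↑ x_R` for every `t ∈ ℝ`; that is,
`G ∈ MDA(Λ)` with the same auxiliary function `f`.  The approach filter `l` is
`atTop` if the right endpoint `x_R` is infinite and `𝓝[<] x_R` if it is finite. -/
theorem stmt8 (F f : ℝ → ℝ) (hmono : Monotone F) (hF0 : F 0 = 0)
    (hFnn : ∀ x, 0 ≤ F x) (hFle : ∀ x, F x ≤ 1)
    (EB : ℝ) (hEBpos : 0 < EB)
    (hInt : IntegrableOn (fun t => 1 - F t) (Set.Ioi 0))
    (hEB : EB = ∫ t in Set.Ioi (0 : ℝ), (1 - F t))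
    (l : Filter ℝ)
    (hl : (l = atTop ∧ ∀ x, F x < 1) ∨
      (∃ xR : ℝ, l = nhdsWithin xR (Set.Iio xR) ∧ (∀ x < xR, F x < 1) ∧ ∀ x ≥ xR, F x = 1))
    (haux : ∀ t : ℝ,
      Tendsto (fun x => (1 - F (x + t * f x)) / (1 - F x)) l (nhds (Real.exp (-t)))) :
    ∀ t : ℝ,
      Tendsto (fun x => (∫ s in Set.Ioi (x + t * f x), (1 - F s)) / (∫ s in Set.Ioi x, (1 - F s)))
        l (nhds (Real.exp (-t))) :=
  stmt8_general F f hmono hFle hInt l hl haux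
end

section
/- Let F be the c.d.f. of a nonnegative random variable B with finite mean and m₂(x) := E[(B∧x)²] = 2∫₀ˣ t·F̄(t)dt. If x_R = ∞ and the lower Matuszewska index satisfies β(F̄) > −2, then limsup_{x→∞} m₂(x)/(2E[B]·x·Ḡ(x)) < ∞, where Ḡ(x) = (1/E[B])∫ₓ^∞ F̄(t)dt. -/
/-!
`β(F̄) > -2` provides `μ > 1` and `r > 0` with `r μ² ≥ 2` and `r F̄(y) ≤ F̄(μy)` for large `y`.
Then `h(y) = y² F̄(y)` at least doubles from `y` to `μy`, while `∫_y^{μy} t F̄(t) dt ≤ μ² F̄(y) y²`,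
so `∫₀ˣ t F̄(t) dt` is dominated by a geometric sum and is `O(h(x))`. Conversely
`x ∫ₓ^∞ F̄ ≥ x ∫ₓ^{μx} F̄ ≥ (μ - 1) r h(x)`.
-/

open Filter Set

open MeasureTheory

open Asymptotics

theorem forall_ge_of_scaling_induction {P : ℝ → Prop} {X μ : ℝ} (hX : 0 < X) (hμ : 1 < μ)
    (base : ∀ x ∈ Icc X (μ * X), P x) (step : ∀ y ≥ X, P y → P (μ * y)) :
    ∀ x ≥ X, P x := by
  have hμ0 : 0 < μ := zero_lt_one.trans hμ
  have key : ∀ n : ℕ, ∀ x ∈ Icc X (μ ^ n * X), P x := by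
    intro n
    induction n with
    | zero =>
      intro x ⟨hXx, hx⟩
      rw [pow_zero, one_mul] at hx
      exact base x ⟨hXx, hx.trans (le_mul_of_one_le_left hX.le hμ.le)⟩
    | succ n ih =>
      rintro x ⟨hXx, hx⟩
      by_cases hxμ : x ≤ μ * X
      · exact base x ⟨hXx, hxμ⟩
      have hx_eq : x = μ * (x / μ) := by field_simp
      rw [hx_eq]
      refine step _ ?_ (ih _ ⟨?_, ?_⟩)
      · rw [ge_iff_le, le_div_iff₀' hμ0]; linarith
      · rw [le_div_iff₀' hμ0]; linarith
      · rwa [div_le_iff₀' hμ0, ← mul_assoc, ← pow_succ']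
  intro x hx
  obtain ⟨n, hn⟩ := pow_unbounded_of_one_lt (x / X) hμ
  exact key n x ⟨hx, ((div_lt_iff₀ hX).1 hn).le⟩

theorem exists_scaling_of_lt_lowerMat {f : ℝ → ℝ} {c : ℝ}
    (h : ((-c : ℝ) : EReal) < lowerMat f) (K : ℝ) :
    ∃ μ > 1, ∃ r > 0, K ≤ r * μ ^ c ∧ ∀ᶠ x in atTop, r * f x ≤ f (μ * x) := by
  obtain ⟨_, ⟨b, ⟨D, hD, hb⟩, rfl⟩, hcb⟩ := lt_sSup_iff.mp h
  have hbc : 0 < b + c := by have := EReal.coe_lt_coe_iff.mp hcb; linarith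
  obtain ⟨μ, hμK, hμ⟩ := (((tendsto_rpow_atTop hbc).const_mul_atTop hD).eventually_ge_atTop K
    |>.and (eventually_gt_atTop 1)).exists
  refine ⟨μ, hμ, D * μ ^ b, by positivity, ?_, ?_⟩
  · rwa [mul_assoc, ← Real.rpow_add (by linarith)]
  · obtain ⟨X, hX⟩ := hb μ hμ
    exact eventually_atTop.2 ⟨X, fun x hx => hX x hx μ ⟨hμ.le, le_rfl⟩⟩

section Antitone

variable {g : ℝ → ℝ}

theorem intervalIntegral_mul_le_sq_mul (hanti : Antitone g) (hg : 0 ≤ g) {a c : ℝ}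
    (ha : 0 ≤ a) (hac : a ≤ c) : ∫ t in a..c, t * g t ≤ c ^ 2 * g a := by
  calc ∫ t in a..c, t * g t ≤ ∫ _ in a..c, c * g a :=
        intervalIntegral.integral_mono_on hac
          (hanti.intervalIntegrable.continuousOn_mul continuousOn_id) intervalIntegrable_const
          fun t ht => mul_le_mul ht.2 (hanti ht.1) (hg t) (ha.trans hac)
    _ = (c - a) * (c * g a) := by rw [intervalIntegral.integral_const, smul_eq_mul]
    _ ≤ c ^ 2 * g a := by nlinarith [mul_nonneg (mul_nonneg ha (ha.trans hac)) (hg a)]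

theorem sub_mul_le_setIntegral_Ioi (hanti : Antitone g) (hg : 0 ≤ g) {a b : ℝ} (hab : a ≤ b)
    (hint : IntegrableOn g (Ioi a)) : (b - a) * g b ≤ ∫ t in Ioi a, g t := by
  calc (b - a) * g b = ∫ _ in a..b, g b := by rw [intervalIntegral.integral_const, smul_eq_mul]
    _ ≤ ∫ t in a..b, g t :=
        intervalIntegral.integral_mono_on hab intervalIntegrable_const hanti.intervalIntegrable
          fun t ht => hanti ht.2
    _ = ∫ t in Ioc a b, g t := intervalIntegral.integral_of_le hab
    _ ≤ ∫ t in Ioi a, g t :=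
        setIntegral_mono_set hint (ae_of_all _ hg) Ioc_subset_Ioi_self.eventuallyLE

variable {μ r : ℝ}

theorem intervalIntegral_mul_le_of_scaling (hanti : Antitone g) (hg : 0 ≤ g) {X K : ℝ}
    (hμ : 1 < μ) (hX : 0 < X) (hrμ : 2 ≤ r * μ ^ 2)
    (hscale : ∀ y ≥ X, r * g y ≤ g (μ * y)) (hKμ : μ ^ 2 ≤ K) (hK0 : g 0 ≤ K * g (μ * X)) :
    ∀ x ≥ X, ∫ t in (0)..x, t * g t ≤ K * (x ^ 2 * g x) := by
  have hK : 0 ≤ K := (sq_nonneg μ).trans hKμ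
  refine forall_ge_of_scaling_induction hX hμ ?_ ?_
  · rintro x ⟨hXx, hxμ⟩
    calc ∫ t in (0)..x, t * g t ≤ x ^ 2 * g 0 :=
          intervalIntegral_mul_le_sq_mul hanti hg le_rfl (hX.le.trans hXx)
      _ ≤ x ^ 2 * (K * g x) := by gcongr; exact hK0.trans (by gcongr; exact hanti hxμ)
      _ = K * (x ^ 2 * g x) := by ring
  · intro y hy ih
    have hy0 : 0 < y := hX.trans_le hy
    have hyμ : y ≤ μ * y := by nlinarith
    have hgrowth : (K + μ ^ 2) * (y ^ 2 * g y) ≤ K * μ ^ 2 * y ^ 2 * (r * g y) := by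
      have : K + μ ^ 2 ≤ K * (r * μ ^ 2) := by nlinarith
      nlinarith [mul_nonneg (sq_nonneg y) (hg y)]
    calc ∫ t in (0)..μ * y, t * g t
        = (∫ t in (0)..y, t * g t) + ∫ t in y..μ * y, t * g t :=
          (intervalIntegral.integral_add_adjacent_intervals
            (hanti.intervalIntegrable.continuousOn_mul continuousOn_id)
            (hanti.intervalIntegrable.continuousOn_mul continuousOn_id)).symm
      _ ≤ K * (y ^ 2 * g y) + (μ * y) ^ 2 * g y :=
          add_le_add ih (intervalIntegral_mul_le_sq_mul hanti hg hy0.le hyμ)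
      _ = (K + μ ^ 2) * (y ^ 2 * g y) := by ring
      _ ≤ K * μ ^ 2 * y ^ 2 * g (μ * y) := hgrowth.trans (by gcongr; exact hscale y hy)
      _ = K * ((μ * y) ^ 2 * g (μ * y)) := by ring

theorem intervalIntegral_mul_isBigO_of_scaling (hanti : Antitone g) (hpos : ∀ t, 0 < g t)
    (hμ : 1 < μ) (hrμ : 2 ≤ r * μ ^ 2) (hscale : ∀ᶠ y in atTop, r * g y ≤ g (μ * y)) :
    (fun x => ∫ t in (0)..x, t * g t) =O[atTop] fun x => x ^ 2 * g x := by
  have hg : 0 ≤ g := fun t => (hpos t).le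
  obtain ⟨X, hX⟩ := eventually_atTop.1 (hscale.and (eventually_gt_atTop 0))
  have hX0 : 0 < X := (hX X le_rfl).2
  set K := max (μ ^ 2) (g 0 / g (μ * X))
  have hbound := intervalIntegral_mul_le_of_scaling hanti hg hμ hX0 hrμ (fun y hy => (hX y hy).1)
    (le_max_left _ _) ((div_le_iff₀ (hpos _)).1 (le_max_right _ _))
  refine IsBigO.of_bound K ((eventually_ge_atTop X).mono fun x hx => ?_)
  rw [Real.norm_of_nonneg (intervalIntegral.integral_nonneg (hX0.trans_le hx).le
      fun t ht => mul_nonneg ht.1 (hg t)),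
    Real.norm_of_nonneg (mul_nonneg (sq_nonneg x) (hg x))]
  exact hbound x hx

theorem sq_mul_isBigO_setIntegral_Ioi (hanti : Antitone g) (hg : 0 ≤ g) {a : ℝ}
    (hint : IntegrableOn g (Ioi a)) (hμ : 1 < μ) (hr : 0 < r)
    (hscale : ∀ᶠ y in atTop, r * g y ≤ g (μ * y)) :
    (fun x => x ^ 2 * g x) =O[atTop] fun x => x * ∫ t in Ioi x, g t := by
  refine IsBigO.of_bound ((μ - 1) * r)⁻¹ ?_
  filter_upwards [hscale, eventually_ge_atTop a, eventually_gt_atTop 0] with x hx hax hx0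
  have htail : (μ - 1) * x * g (μ * x) ≤ ∫ t in Ioi x, g t := by
    have := sub_mul_le_setIntegral_Ioi hanti hg (by nlinarith : x ≤ μ * x)
      (hint.mono_set (Ioi_subset_Ioi hax))
    linarith
  have hcr : 0 < (μ - 1) * r := mul_pos (by linarith) hr
  rw [Real.norm_of_nonneg (mul_nonneg (sq_nonneg x) (hg x)),
    Real.norm_of_nonneg (mul_nonneg hx0.le (setIntegral_nonneg measurableSet_Ioi fun t _ => hg t)),
    inv_mul_eq_div, le_div_iff₀' hcr]
  calc (μ - 1) * r * (x ^ 2 * g x) = x * ((μ - 1) * x * (r * g x)) := by ring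
    _ ≤ x * ((μ - 1) * x * g (μ * x)) := by gcongr
    _ ≤ x * ∫ t in Ioi x, g t := mul_le_mul_of_nonneg_left htail hx0.le

theorem intervalIntegral_mul_isBigO_of_neg_two_lt_lowerMat (hanti : Antitone g)
    (hpos : ∀ t, 0 < g t) {a : ℝ} (hint : IntegrableOn g (Ioi a))
    (hβ : ((-2 : ℝ) : EReal) < lowerMat g) :
    (fun x => ∫ t in (0)..x, t * g t) =O[atTop] fun x => x * ∫ t in Ioi x, g t := by
  obtain ⟨μ, hμ, r, hr, hrμ, hscale⟩ := exists_scaling_of_lt_lowerMat hβ 2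
  rw [Real.rpow_two] at hrμ
  exact (intervalIntegral_mul_isBigO_of_scaling hanti hpos hμ hrμ hscale).trans
    (sq_mul_isBigO_setIntegral_Ioi hanti (fun t => (hpos t).le) hint hμ hr hscale)

end Antitone

theorem stmt18_general (F : ℝ → ℝ) (hmono : Monotone F)
    (hFlt : ∀ x, F x < 1)
    (EB : ℝ) (hEBpos : 0 < EB)
    (hInt : MeasureTheory.IntegrableOn (fun t => 1 - F t) (Set.Ioi 0))
    (hβ : ((-2 : ℝ) : EReal) < lowerMat (fun x => 1 - F x)) :
    ∃ C : ℝ, ∀ᶠ x in atTop,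
      (2 * ∫ t in Set.Ioc (0 : ℝ) x, t * (1 - F t)) /
          (2 * EB * x * ((∫ t in Set.Ioi x, (1 - F t)) / EB)) ≤ C := by
  have hanti : Antitone fun t => 1 - F t := fun a b hab => sub_le_sub_left (hmono hab) 1
  have hpos : ∀ t, 0 < 1 - F t := fun t => sub_pos.2 (hFlt t)
  obtain ⟨C, hC0, hC⟩ :=
    (intervalIntegral_mul_isBigO_of_neg_two_lt_lowerMat hanti hpos hInt hβ).exists_nonneg
  refine ⟨C, ?_⟩
  filter_upwards [hC.bound, eventually_gt_atTop 0] with x hx hx0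
  set I := ∫ t in Ioi x, (1 - F t)
  have htail : 0 ≤ x * I :=
    mul_nonneg hx0.le (setIntegral_nonneg measurableSet_Ioi fun t _ => (hpos t).le)
  have hden : 2 * EB * x * (I / EB) = 2 * (x * I) := by field_simp
  rw [Real.norm_of_nonneg htail] at hx
  rw [← intervalIntegral.integral_of_le hx0.le, hden, mul_div_mul_left _ _ two_ne_zero]
  exact div_le_of_le_mul₀ htail hC0 ((le_abs_self _).trans hx)

/-- Let `F` be the c.d.f. of a nonnegative random variable with finite
positive mean `EB = ∫₀^∞ F̄`, unbounded support, and `m₂(x) = 2∫₀ˣ t F̄(t) dt`.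
If the lower Matuszewska index satisfies `β(F̄) > -2`, then
`limsup_{x→∞} m₂(x)/(2 EB x Ḡ(x)) < ∞`, where `Ḡ(x) = (1/EB)∫ₓ^∞ F̄`; i.e. the
ratio is eventually bounded by some constant `C`. -/
theorem stmt18 (F : ℝ → ℝ) (hmono : Monotone F) (hF0 : F 0 = 0)
    (hFnn : ∀ x, 0 ≤ F x) (hFlt : ∀ x, F x < 1)
    (EB : ℝ) (hEBpos : 0 < EB)
    (hInt : MeasureTheory.IntegrableOn (fun t => 1 - F t) (Set.Ioi 0))
    (hEB : EB = ∫ t in Set.Ioi (0 : ℝ), (1 - F t))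
    (hβ : ((-2 : ℝ) : EReal) < lowerMat (fun x => 1 - F x)) :
    ∃ C : ℝ, ∀ᶠ x in atTop,
      (2 * ∫ t in Set.Ioc (0 : ℝ) x, t * (1 - F t)) /
          (2 * EB * x * ((∫ t in Set.Ioi x, (1 - F t)) / EB)) ≤ C :=
  stmt18_general F hmono hFlt EB hEBpos hInt hβ
end
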